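/- Assume h-exchangeability of the densities. Then for every symmetric, weakly monotone measurable decision rule D : [0,1]^K → {0,1}^K and every 1 ≤ L ≤ K, the false discovery rate under configuration h_L satisfies FDR_{h_L}(D) = L!(K−L)! · ∫_Q Σ_{k=1}^K D_k(u) · ( Σ_{S ⊆ {1,…,K}, |S| = L} f_S(u) · r_{k,S} ) du, where f_S denotes the density under the configuration whose set of false nulls is exactly S, r_{k,S} = |{1,…,k} ∩ S^c|/k − |{1,…,k−1} ∩ S^c|/(k−1) with the convention 0/0 = 0, S^c = {1,…,K} \ S is the set of true nulls, and Q = {u ∈ [0,1]^K : 0 ≤ u_1 ≤ … ≤ u_K ≤ 1}. -/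

import Mathlib

open MeasureTheory Finset

noncomputable section

/-- The unit cube `[0,1]^K`. -/
def unitCube (K : ℕ) : Set (Fin K → ℝ) := Set.Icc 0 1

/-- The "lower corner" set `Q = {u ∈ [0,1]^K : u 1 ≤ u 2 ≤ … ≤ u K}`. -/
def QSet (K : ℕ) : Set (Fin K → ℝ) :=
  {u | Monotone u ∧ ∀ i, 0 ≤ u i ∧ u i ≤ 1}

/-- Symmetry of a decision rule: `σ(D(u)) = D(σ(u))` for every permutation `σ`. -/
def IsSymmRule (K : ℕ) (D : (Fin K → ℝ) → Fin K → ℝ) : Prop :=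
  ∀ (σ : Equiv.Perm (Fin K)) (u : Fin K → ℝ), D (u ∘ σ) = (D u) ∘ σ

/-- Weak monotonicity: `u i ≤ u j` implies `D i (u) ≥ D j (u)`. -/
def IsWeaklyMonotone (K : ℕ) (D : (Fin K → ℝ) → Fin K → ℝ) : Prop :=
  ∀ (u : Fin K → ℝ) (i j : Fin K), u i ≤ u j → D u j ≤ D u i

/-- h-exchangeability: `f_h(u) = f_{σ(h)}(σ(u))`. -/
def Exchangeable (K : ℕ) (f : (Fin K → Bool) → (Fin K → ℝ) → ℝ) : Prop :=
  ∀ (σ : Equiv.Perm (Fin K)) (h : Fin K → Bool) (u : Fin K → ℝ),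
    f h u = f (h ∘ σ) (u ∘ σ)

/-- False discovery rate of `D` under configuration `h`. -/
def FDRm (K : ℕ) (f : (Fin K → Bool) → (Fin K → ℝ) → ℝ) (h : Fin K → Bool)
    (D : (Fin K → ℝ) → Fin K → ℝ) : ℝ :=
  ∫ u in unitCube K,
    ((∑ k, if h k then 0 else D u k) / max (∑ k, D u k) 1) * f h u

/-- `r_{k,S}`: the change in false discovery proportion between rejecting the `k` and the
`k−1` smallest p-values, when the set of false nulls is `S` (with the convention
`0/0 = 0`, automatic in Lean since division by zero is zero). With 1-based index `k`,
`{1,…,k}` is `Finset.Iic k` and `{1,…,k−1}` is `Finset.Iio k` for `k : Fin K`. -/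
def rCoef (K : ℕ) (k : Fin K) (S : Finset (Fin K)) : ℝ :=
  ((Finset.Iic k ∩ Sᶜ).card : ℝ) / ((k : ℕ) + 1) -
    ((Finset.Iio k ∩ Sᶜ).card : ℝ) / (k : ℕ)

/-!
The permuted copies `{u | u ∘ σ ∈ Q}` of the sorted region tile the cube up to the null set of
points with a repeated coordinate, and `u ↦ u ∘ σ` preserves volume, so
`FDR = ∫_Q Σ_σ FDP_{h_L}(D(u ∘ σ)) f_{h_L}(u ∘ σ)`. Symmetry of `D` and exchangeability of `f`
turn the `σ`-term into the same quantity at `u` under the configuration whose false nulls are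
`σ({1,…,L})`, and each `L`-set arises from exactly `L!(K−L)!` permutations. On `Q` weak
monotonicity makes `D(u)` reject an initial segment `{1,…,R}`, whose FDP telescopes into
`Σ_k D_k(u) r_{k,S}`.
-/

section PermutationCount

variable {α : Type*} [Fintype α] [DecidableEq α]

def permMapEquiv (T S : Finset α) :
    {σ : Equiv.Perm α // ∀ a, a ∈ T ↔ σ a ∈ S} ≃
      ({a // a ∈ T} ≃ {a // a ∈ S}) × ({a // a ∉ T} ≃ {a // a ∉ S}) where
  toFun σ := (σ.1.subtypeEquiv σ.2, σ.1.subtypeEquiv fun a => not_congr (σ.2 a))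
  invFun e := ⟨Equiv.subtypeCongr e.1 e.2, fun a => by
    by_cases ha : a ∈ T
    · simp [Equiv.subtypeCongr, Equiv.sumCompl_symm_apply_of_pos ha, ha, (e.1 ⟨a, ha⟩).2]
    · simp [Equiv.subtypeCongr, Equiv.sumCompl_symm_apply_of_neg ha, ha, (e.2 ⟨a, ha⟩).2]⟩
  left_inv σ := by
    ext a
    by_cases ha : a ∈ T
    · simp [Equiv.subtypeCongr, Equiv.sumCompl_symm_apply_of_pos ha]
    · simp [Equiv.subtypeCongr, Equiv.sumCompl_symm_apply_of_neg ha]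
  right_inv e := by
    ext ⟨a, ha⟩
    · simp [Equiv.subtypeCongr, Equiv.sumCompl_symm_apply_of_pos ha]
    · simp [Equiv.subtypeCongr, Equiv.sumCompl_symm_apply_of_neg ha]

theorem card_filter_perm_map_eq {T S : Finset α} (hTS : #S = #T) :
    #{σ : Equiv.Perm α | T.map σ.toEmbedding = S} =
      (#T).factorial * (Fintype.card α - #T).factorial := by
  have hmap : ∀ σ : Equiv.Perm α, T.map σ.toEmbedding = S ↔ ∀ a, a ∈ T ↔ σ a ∈ S := by
    intro σ
    rw [Finset.ext_iff, ← σ.forall_congr_right]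
    simp
  rw [Finset.filter_congr fun σ _ => hmap σ, ← Fintype.card_subtype,
    Fintype.card_congr (permMapEquiv T S), Fintype.card_prod,
    Fintype.card_equiv (Fintype.equivOfCardEq (by simp [hTS])),
    Fintype.card_equiv (Fintype.equivOfCardEq (by simp [Fintype.card_subtype_compl, hTS]))]
  simp [Fintype.card_subtype_compl]

theorem sum_perm_map_eq_smul_sum_powersetCard {M : Type*} [AddCommMonoid M] (T : Finset α)
    (G : Finset α → M) :
    ∑ σ : Equiv.Perm α, G (T.map σ.toEmbedding) =
      ((#T).factorial * (Fintype.card α - #T).factorial) • ∑ S ∈ powersetCard #T univ, G S := by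
  rw [← Finset.sum_fiberwise_of_maps_to (t := powersetCard #T univ)
    (g := fun σ => T.map σ.toEmbedding) (fun σ _ => by simp), Finset.smul_sum]
  refine Finset.sum_congr rfl fun S hS => ?_
  rw [Finset.sum_congr rfl fun σ hσ => congrArg G (Finset.mem_filter.1 hσ).2, Finset.sum_const,
    card_filter_perm_map_eq (Finset.mem_powersetCard_univ.1 hS)]

end PermutationCount

section FalseDiscoveryProportion

variable {ι : Type*} [Fintype ι]

def fdp (h : ι → Bool) (d : ι → ℝ) : ℝ :=
  (∑ k, if h k then 0 else d k) / max (∑ k, d k) 1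

theorem measurable_fdp (h : ι → Bool) : Measurable (fdp h) :=
  (Finset.measurable_sum _ fun k _ => by split_ifs <;> fun_prop).div (by fun_prop)

theorem abs_fdp_le_one (h : ι → Bool) {d : ι → ℝ} (hd : ∀ k, 0 ≤ d k) : |fdp h d| ≤ 1 := by
  have hnum : 0 ≤ ∑ k, (if h k then 0 else d k) :=
    Finset.sum_nonneg fun k _ => by split_ifs <;> simp [hd k]
  have hle : ∑ k, (if h k then 0 else d k) ≤ ∑ k, d k :=
    Finset.sum_le_sum fun k _ => by split_ifs <;> simp [hd k]
  have hden : 0 < max (∑ k, d k) 1 := lt_max_of_lt_right one_pos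
  rw [fdp, abs_of_nonneg (div_nonneg hnum hden.le), div_le_one hden]
  exact hle.trans (le_max_left _ _)

theorem fdp_comp_perm (h : ι → Bool) (d : ι → ℝ) (σ : Equiv.Perm ι) :
    fdp h (d ∘ σ) = fdp (h ∘ σ.symm) d := by
  unfold fdp
  rw [← Equiv.sum_comp σ (fun k => if (h ∘ σ.symm) k then 0 else d k), ← Equiv.sum_comp σ d]
  simp

end FalseDiscoveryProportion

section SortedRejections

variable {K : ℕ}

def fdpPrefix (S : Finset (Fin K)) (m : ℕ) : ℝ :=
  (#{k : Fin K | (k : ℕ) < m ∧ k ∉ S} : ℝ) / m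

theorem rCoef_eq_fdpPrefix_sub (k : Fin K) (S : Finset (Fin K)) :
    rCoef K k S = fdpPrefix S (k + 1) - fdpPrefix S k := by
  have hIic : Finset.Iic k ∩ Sᶜ = ({j : Fin K | (j : ℕ) < k + 1 ∧ j ∉ S} : Finset (Fin K)) := by
    ext j
    simp only [Finset.mem_inter, Finset.mem_Iic, Finset.mem_compl, Finset.mem_filter,
      Finset.mem_univ, true_and, Fin.le_iff_val_le_val, Nat.lt_succ_iff]
  have hIio : Finset.Iio k ∩ Sᶜ = ({j : Fin K | (j : ℕ) < k ∧ j ∉ S} : Finset (Fin K)) := by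
    ext j; simp
  rw [rCoef, fdpPrefix, fdpPrefix, hIic, hIio]
  push_cast
  rfl

theorem sum_ite_lt_mul_rCoef {R : ℕ} (hR : R ≤ K) (S : Finset (Fin K)) :
    ∑ k : Fin K, (if (k : ℕ) < R then (1 : ℝ) else 0) * rCoef K k S = fdpPrefix S R := by
  have hrange : (range K).filter (· < R) = range R := by
    ext i; simp only [mem_filter, mem_range]; omega
  simp_rw [rCoef_eq_fdpPrefix_sub, ite_mul, one_mul, zero_mul]
  rw [Fin.sum_univ_eq_sum_range (fun i => if i < R then fdpPrefix S (i + 1) - fdpPrefix S i else 0),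
    ← Finset.sum_filter, hrange, Finset.sum_range_sub]
  simp [fdpPrefix]

theorem fdp_ite_lt {R : ℕ} (hR : R ≤ K) (S : Finset (Fin K)) :
    fdp (fun k => decide (k ∈ S)) (fun k : Fin K => if (k : ℕ) < R then 1 else 0) =
      fdpPrefix S R := by
  have hnum : ∑ k : Fin K, (if decide (k ∈ S) then 0 else if (k : ℕ) < R then (1 : ℝ) else 0) =
      #{k : Fin K | (k : ℕ) < R ∧ k ∉ S} := by
    rw [Finset.card_filter, Nat.cast_sum]
    refine Finset.sum_congr rfl fun k _ => ?_
    by_cases hk : k ∈ S <;> by_cases hkR : (k : ℕ) < R <;> simp [hk, hkR]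
  have hden : ∑ k : Fin K, (if (k : ℕ) < R then (1 : ℝ) else 0) = R := by
    rw [Finset.sum_boole, Fin.card_filter_val_lt, min_eq_right hR]
  rw [fdp, fdpPrefix, hnum, hden]
  rcases Nat.eq_zero_or_pos R with rfl | hpos
  · simp
  · rw [max_eq_left (by exact_mod_cast hpos)]

theorem exists_eq_ite_lt_of_antitone {d : Fin K → ℝ} (h01 : ∀ k, d k = 0 ∨ d k = 1)
    (hd : Antitone d) : ∃ R ≤ K, d = fun k : Fin K => if (k : ℕ) < R then (1 : ℝ) else 0 := by
  set A : Finset (Fin K) := {k | d k = 1}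
  have hA : ∀ k, d k = 1 ↔ (k : ℕ) < #A := by
    intro k
    constructor
    · intro hk
      have hsub : Finset.Iic k ⊆ A := fun j hj => Finset.mem_filter.2
        ⟨Finset.mem_univ j, (h01 j).resolve_left fun h => by linarith [hd (Finset.mem_Iic.1 hj)]⟩
      simpa using Finset.card_le_card hsub
    · intro hk
      by_contra hk1
      have hk0 := (h01 k).resolve_right hk1
      have hsub : A ⊆ Finset.Iio k := fun j hj => Finset.mem_Iio.2 <| lt_of_not_ge fun hkj => by
        linarith [hd hkj, (Finset.mem_filter.1 hj).2]
      have := Finset.card_le_card hsub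
      simp only [Fin.card_Iio] at this
      omega
  refine ⟨#A, (Finset.card_le_univ A).trans (by simp), funext fun k => ?_⟩
  split_ifs with hk
  · exact (hA k).2 hk
  · exact (h01 k).resolve_right (mt (hA k).1 hk)

theorem fdp_eq_sum_mul_rCoef {d : Fin K → ℝ} (h01 : ∀ k, d k = 0 ∨ d k = 1) (hd : Antitone d)
    (S : Finset (Fin K)) :
    fdp (fun k => decide (k ∈ S)) d = ∑ k, d k * rCoef K k S := by
  obtain ⟨R, hR, rfl⟩ := exists_eq_ite_lt_of_antitone h01 hd
  rw [fdp_ite_lt hR, sum_ite_lt_mul_rCoef hR]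

end SortedRejections

section CoordinatePermutation

variable {ι : Type*}

def compPerm (σ : Equiv.Perm ι) : (ι → ℝ) ≃ᵐ (ι → ℝ) :=
  MeasurableEquiv.piCongrLeft (fun _ => ℝ) σ.symm

@[simp]
theorem compPerm_apply (σ : Equiv.Perm ι) (u : ι → ℝ) : compPerm σ u = u ∘ σ := by
  ext i
  simp [compPerm, MeasurableEquiv.piCongrLeft, Equiv.piCongrLeft]

theorem measurePreserving_compPerm [Fintype ι] (σ : Equiv.Perm ι) :
    MeasurePreserving (compPerm σ) :=
  volume_measurePreserving_piCongrLeft (fun _ => ℝ) σ.symm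

theorem volume_setOf_eq_apply [Fintype ι] {i j : ι} (hij : i ≠ j) :
    volume {u : ι → ℝ | u i = u j} = 0 := by
  classical
  let φ : (ι → ℝ) →ₗ[ℝ] ℝ := LinearMap.proj (R := ℝ) (φ := fun _ : ι => ℝ) i - LinearMap.proj j
  have hker : {u : ι → ℝ | u i = u j} = (LinearMap.ker φ : Set (ι → ℝ)) := by
    ext u; simp [φ, sub_eq_zero]
  rw [hker]
  refine Measure.addHaar_submodule _ _ fun htop => ?_
  have : φ (Pi.single i 1) = 0 := LinearMap.mem_ker.1 (htop ▸ Submodule.mem_top)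
  simp [φ, Ne.symm hij] at this

theorem volume_setOf_not_injective [Fintype ι] :
    volume {u : ι → ℝ | ¬Function.Injective u} = 0 := by
  have hsub : {u : ι → ℝ | ¬Function.Injective u} ⊆ ⋃ (i) (j) (_ : i ≠ j), {u | u i = u j} := by
    intro u hu
    simp only [Function.Injective, not_forall] at hu
    obtain ⟨i, j, hij, hne⟩ := hu
    simp only [Set.mem_iUnion]
    exact ⟨i, j, hne, hij⟩
  exact measure_mono_null hsub <| measure_iUnion_null fun i => measure_iUnion_null fun j =>
    measure_iUnion_null fun hij => volume_setOf_eq_apply hij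

end CoordinatePermutation

section SortedRegion

variable {K : ℕ}

theorem aedisjoint_preimage_compPerm_monotone {σ τ : Equiv.Perm (Fin K)} (hστ : σ ≠ τ) :
    AEDisjoint volume (compPerm σ ⁻¹' {u | Monotone u}) (compPerm τ ⁻¹' {u | Monotone u}) := by
  refine measure_mono_null (fun u ⟨hσ, hτ⟩ => ?_) volume_setOf_not_injective
  intro hu
  apply hστ
  simp only [Set.mem_preimage, compPerm_apply, Set.mem_ofPred_eq] at hσ hτ
  exact Equiv.ext fun x => hu (congrFun (Tuple.unique_monotone hσ hτ) x)

theorem setIntegral_eq_setIntegral_monotone_sum_perm {s : Set (Fin K → ℝ)} (hs : MeasurableSet s)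
    (hperm : ∀ σ : Equiv.Perm (Fin K), ∀ u ∈ s, u ∘ σ ∈ s) {φ : (Fin K → ℝ) → ℝ}
    (hφ : IntegrableOn φ s) :
    ∫ u in s, φ u = ∫ u in s ∩ {u | Monotone u}, ∑ σ : Equiv.Perm (Fin K), φ (u ∘ σ) := by
  set M : Set (Fin K → ℝ) := s ∩ {u | Monotone u}
  have hM : MeasurableSet M := hs.inter isClosed_monotone.measurableSet
  have hmem : ∀ (σ : Equiv.Perm (Fin K)) u, u ∘ σ ∈ s ↔ u ∈ s := fun σ u =>
    ⟨fun hu => by simpa [Function.comp_assoc] using hperm σ.symm _ hu, hperm σ u⟩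
  have hpre : ∀ σ : Equiv.Perm (Fin K), compPerm σ ⁻¹' s = s := fun σ => by
    ext u; simp [hmem]
  have hcover : s = ⋃ σ : Equiv.Perm (Fin K), compPerm σ.symm ⁻¹' M := by
    ext u
    simp only [M, Set.mem_iUnion, Set.mem_preimage, compPerm_apply, Set.mem_inter_iff, hmem,
      Set.mem_ofPred_eq]
    exact ⟨fun hu => ⟨(Tuple.sort u).symm, hu, Tuple.monotone_sort u⟩, fun ⟨_, hu, _⟩ => hu⟩
  have hpiece : ∀ σ : Equiv.Perm (Fin K),
      ∫ u in compPerm σ.symm ⁻¹' M, φ u = ∫ u in M, φ (u ∘ σ) := fun σ => by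
    simpa [Function.comp_assoc] using (measurePreserving_compPerm σ.symm).setIntegral_preimage_emb
      (compPerm σ.symm).measurableEmbedding (fun v => φ (v ∘ σ)) M
  have hint : ∀ σ : Equiv.Perm (Fin K), IntegrableOn (fun u => φ (u ∘ σ)) M := fun σ => by
    refine IntegrableOn.mono_set ?_ Set.inter_subset_left
    rw [← (measurePreserving_compPerm σ).integrableOn_comp_preimage
      (compPerm σ).measurableEmbedding, hpre] at hφ
    simpa [Function.comp_def] using hφ
  calc ∫ u in s, φ u = ∫ u in ⋃ σ : Equiv.Perm (Fin K), compPerm σ.symm ⁻¹' M, φ u := by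
        rw [← hcover]
    _ = ∑ σ : Equiv.Perm (Fin K), ∫ u in compPerm σ.symm ⁻¹' M, φ u := by
        have hnull : ∀ σ : Equiv.Perm (Fin K), NullMeasurableSet (compPerm σ.symm ⁻¹' M) :=
          fun σ => (hM.preimage (compPerm σ.symm).measurable).nullMeasurableSet
        have hdisj : Pairwise (Function.onFun (AEDisjoint volume) fun σ : Equiv.Perm (Fin K) =>
            compPerm σ.symm ⁻¹' M) := fun σ τ hστ =>
          (aedisjoint_preimage_compPerm_monotone (Equiv.symm_bijective.injective.ne hστ)).mono
            (Set.preimage_mono Set.inter_subset_right) (Set.preimage_mono Set.inter_subset_right)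
        rw [integral_iUnion_ae hnull hdisj (by rwa [← hcover]), tsum_fintype]
    _ = ∑ σ : Equiv.Perm (Fin K), ∫ u in M, φ (u ∘ σ) := Finset.sum_congr rfl fun σ _ => hpiece σ
    _ = ∫ u in M, ∑ σ : Equiv.Perm (Fin K), φ (u ∘ σ) :=
        (integral_finsetSum _ fun σ _ => hint σ).symm

end SortedRegion

section FalseDiscoveryRate

variable {K : ℕ} {f : (Fin K → Bool) → (Fin K → ℝ) → ℝ} {D : (Fin K → ℝ) → Fin K → ℝ}

theorem QSet_eq (K : ℕ) : QSet K = unitCube K ∩ {u | Monotone u} := by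
  ext u
  simp only [QSet, unitCube, Set.mem_inter_iff, Set.mem_Icc, Set.mem_ofPred_eq, Pi.le_def,
    Pi.zero_apply, Pi.one_apply]
  exact ⟨fun ⟨hu, hI⟩ => ⟨⟨fun i => (hI i).1, fun i => (hI i).2⟩, hu⟩,
    fun ⟨⟨h0, h1⟩, hu⟩ => ⟨hu, fun i => ⟨h0 i, h1 i⟩⟩⟩

theorem integrableOn_fdp_mul (hfInt : ∀ h, IntegrableOn (f h) (unitCube K))
    (hDMeas : Measurable D) (hD01 : ∀ u k, D u k = 0 ∨ D u k = 1) (h : Fin K → Bool) :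
    IntegrableOn (fun u => fdp h (D u) * f h u) (unitCube K) :=
  (hfInt h).bdd_mul ((measurable_fdp h).comp hDMeas).aestronglyMeasurable <|
    ae_of_all _ fun u => (Real.norm_eq_abs _).trans_le <|
      abs_fdp_le_one h fun k => by rcases hD01 u k with hk | hk <;> simp [hk]

theorem fdp_mul_comp_perm (hExch : Exchangeable K f) (hDSymm : IsSymmRule K D)
    (h : Fin K → Bool) (u : Fin K → ℝ) (σ : Equiv.Perm (Fin K)) :
    fdp h (D (u ∘ σ)) * f h (u ∘ σ) = fdp (h ∘ σ.symm) (D u) * f (h ∘ σ.symm) u := by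
  rw [hDSymm, fdp_comp_perm, hExch σ (h ∘ σ.symm) u, Function.comp_assoc, σ.symm_comp_self,
    Function.comp_id]

theorem sum_perm_fdp_mul_eq {T : Finset (Fin K)} {L : ℕ} (hT : #T = L)
    (hExch : Exchangeable K f) (hD01 : ∀ u k, D u k = 0 ∨ D u k = 1) (hDSymm : IsSymmRule K D)
    (hDMono : IsWeaklyMonotone K D) {u : Fin K → ℝ} (hu : Monotone u) :
    ∑ σ : Equiv.Perm (Fin K),
        fdp (fun k => decide (k ∈ T)) (D (u ∘ σ)) * f (fun k => decide (k ∈ T)) (u ∘ σ) =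
      ((L.factorial : ℝ) * (K - L).factorial) *
        ∑ k : Fin K, D u k *
          ∑ S ∈ Finset.univ.powersetCard L, f (fun k' => decide (k' ∈ S)) u * rCoef K k S := by
  have hTσ : ∀ σ : Equiv.Perm (Fin K),
      (fun k => decide (k ∈ T)) ∘ σ.symm = fun k => decide (k ∈ T.map σ.toEmbedding) :=
    fun σ => by ext k; simp
  have hanti : Antitone (D u) := fun i j hij => hDMono u i j (hu hij)
  simp_rw [fdp_mul_comp_perm hExch hDSymm, hTσ]
  rw [sum_perm_map_eq_smul_sum_powersetCard T
    (fun S => fdp (fun k => decide (k ∈ S)) (D u) * f (fun k => decide (k ∈ S)) u),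
    hT, Fintype.card_fin, nsmul_eq_mul]
  push_cast
  simp_rw [fdp_eq_sum_mul_rCoef (hD01 u) hanti, Finset.sum_mul, Finset.mul_sum]
  rw [Finset.sum_comm]
  exact Finset.sum_congr rfl fun k _ => Finset.sum_congr rfl fun S _ => by ring

end FalseDiscoveryRate

theorem FDR_as_integral_over_Q_general
    (K L : ℕ) (hL2 : L ≤ K)
    (f : (Fin K → Bool) → (Fin K → ℝ) → ℝ)
    (hfInt : ∀ h, IntegrableOn (f h) (unitCube K))
    (hExch : Exchangeable K f)
    (D : (Fin K → ℝ) → Fin K → ℝ)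
    (hDMeas : Measurable D) (hD01 : ∀ u k, D u k = 0 ∨ D u k = 1)
    (hDSymm : IsSymmRule K D) (hDMono : IsWeaklyMonotone K D) :
    FDRm K f (fun k => decide ((k : ℕ) < L)) D =
      ((L.factorial : ℝ) * (K - L).factorial) *
        ∫ u in QSet K,
          ∑ k : Fin K, D u k *
            ∑ S ∈ Finset.univ.powersetCard L,
              f (fun k' => decide (k' ∈ S)) u * rCoef K k S := by
  set T : Finset (Fin K) := {k | (k : ℕ) < L}
  have hT : #T = L := by simp [T, Fin.card_filter_val_lt, hL2]
  have hL : (fun k : Fin K => decide ((k : ℕ) < L)) = fun k => decide (k ∈ T) := by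
    ext k; simp [T]
  have hcube : ∀ σ : Equiv.Perm (Fin K), ∀ u ∈ unitCube K, u ∘ σ ∈ unitCube K :=
    fun σ u hu => ⟨fun i => hu.1 (σ i), fun i => hu.2 (σ i)⟩
  rw [hL, QSet_eq, ← integral_const_mul]
  calc FDRm K f (fun k => decide (k ∈ T)) D
      = ∫ u in unitCube K, fdp (fun k => decide (k ∈ T)) (D u) * f (fun k => decide (k ∈ T)) u :=
        rfl
    _ = ∫ u in unitCube K ∩ {u | Monotone u}, ∑ σ : Equiv.Perm (Fin K),
          fdp (fun k => decide (k ∈ T)) (D (u ∘ σ)) * f (fun k => decide (k ∈ T)) (u ∘ σ) :=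
        setIntegral_eq_setIntegral_monotone_sum_perm measurableSet_Icc hcube
          (integrableOn_fdp_mul hfInt hDMeas hD01 _)
    _ = _ := setIntegral_congr_fun (measurableSet_Icc.inter isClosed_monotone.measurableSet)
          fun u hu => sum_perm_fdp_mul_eq hT hExch hD01 hDSymm hDMono hu.2

/-- Under h-exchangeability, for every symmetric, weakly monotone,
0/1-valued measurable decision rule `D` and every `1 ≤ L ≤ K`,
`FDR_{h_L}(D) = L!(K−L)! ∫_Q Σ_k D_k(u) (Σ_{|S|=L} f_S(u) r_{k,S}) du`. -/
theorem FDR_as_integral_over_Q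
    (K L : ℕ) (hL1 : 1 ≤ L) (hL2 : L ≤ K)
    (f : (Fin K → Bool) → (Fin K → ℝ) → ℝ)
    (hfMeas : ∀ h, Measurable (f h)) (hfNonneg : ∀ h u, 0 ≤ f h u)
    (hfInt : ∀ h, IntegrableOn (f h) (unitCube K))
    (hExch : Exchangeable K f)
    (D : (Fin K → ℝ) → Fin K → ℝ)
    (hDMeas : Measurable D) (hD01 : ∀ u k, D u k = 0 ∨ D u k = 1)
    (hDSymm : IsSymmRule K D) (hDMono : IsWeaklyMonotone K D) :
    FDRm K f (fun k => decide ((k : ℕ) < L)) D =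
      ((L.factorial : ℝ) * (K - L).factorial) *
        ∫ u in QSet K,
          ∑ k : Fin K, D u k *
            ∑ S ∈ Finset.univ.powersetCard L,
              f (fun k' => decide (k' ∈ S)) u * rCoef K k S :=
  FDR_as_integral_over_Q_general K L hL2 f hfInt hExch D hDMeas hD01 hDSymm hDMono

end
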